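/- Let K be a complex Hilbert space, γ a bounded operator on K with γ∘γ = −I and γ* = −γ, and let P be an orthogonal projection on K with γPγ* = I − P. For θ ∈ ℝ let P(θ,P) be the operator on K ⊕ K with block matrix [[cos²θ·P + sin²θ·(I−P), −cosθ·sinθ·I],[−cosθ·sinθ·I, cos²θ·(I−P) + sin²θ·P]], and let γ̃ = γ ⊕ (−γ). Then: (1) P(θ,P) is an orthogonal projection on K ⊕ K satisfying γ̃ P(θ,P) γ̃* = I − P(θ,P); (2) P(0,P) = P ⊕ (I−P); (3) P(π/4,P) = ½[[I, −I],[−I, I]], the orthogonal projection onto the orthogonal complement of the diagonal {(f,f) : f ∈ K}; (4) a vector ξ = (ξ₊, ξ₋) ∈ K ⊕ K lies in ker P(θ,P) if and only if cosθ·Pξ₊ = sinθ·Pξ₋ and sinθ·(I−P)ξ₊ = cosθ·(I−P)ξ₋. -/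

import Mathlib

noncomputable section

open ContinuousLinearMap

variable {K : Type*} [NormedAddCommGroup K] [InnerProductSpace ℂ K]

/-- The Hilbert direct sum `K ⊕ K`, identified with `K × K` as a set. -/
def prodE (K : Type*) [NormedAddCommGroup K] [InnerProductSpace ℂ K] :
    WithLp 2 (K × K) ≃L[ℂ] K × K :=
  WithLp.prodContinuousLinearEquiv 2 ℂ K K

/-- Transport an operator on `K × K` to the Hilbert direct sum `K ⊕ K`. -/
def toSum {K : Type*} [NormedAddCommGroup K] [InnerProductSpace ℂ K]
    (f : K × K →L[ℂ] K × K) : WithLp 2 (K × K) →L[ℂ] WithLp 2 (K × K) :=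
  ((prodE K).symm : K × K →L[ℂ] WithLp 2 (K × K)) ∘L f ∘L
    ((prodE K) : WithLp 2 (K × K) →L[ℂ] K × K)

/-- The operator on `K ⊕ K` with block matrix `[[A, B],[C, D]]`. -/
def blockOp {K : Type*} [NormedAddCommGroup K] [InnerProductSpace ℂ K]
    (A B C D : K →L[ℂ] K) : WithLp 2 (K × K) →L[ℂ] WithLp 2 (K × K) :=
  toSum ((A.coprod B).prod (C.coprod D))

/-- `γ̃ = γ ⊕ (-γ)` on `K ⊕ K`. -/
def gammaTilde (γ : K →L[ℂ] K) : WithLp 2 (K × K) →L[ℂ] WithLp 2 (K × K) :=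
  toSum (γ.prodMap (-γ))

/-- The diagonal subspace `Δ = {(f, f) : f ∈ K} ⊆ K ⊕ K`. -/
def diagSub (K : Type*) [NormedAddCommGroup K] [InnerProductSpace ℂ K] :
    Submodule ℂ (WithLp 2 (K × K)) :=
  LinearMap.range ((((prodE K).symm : K × K →L[ℂ] WithLp 2 (K × K)) ∘L
    ((ContinuousLinearMap.id ℂ K).prod (ContinuousLinearMap.id ℂ K))) : K →ₗ[ℂ] WithLp 2 (K × K))

/-- The family `P(θ,P)` on `K ⊕ K`, with block matrix
`[[cos²θ·P + sin²θ·(I-P), -cosθ·sinθ·I],[-cosθ·sinθ·I, cos²θ·(I-P) + sin²θ·P]]`. -/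
def Ptheta {K : Type*} [NormedAddCommGroup K] [InnerProductSpace ℂ K]
    (θ : ℝ) (P : K →L[ℂ] K) : WithLp 2 (K × K) →L[ℂ] WithLp 2 (K × K) :=
  blockOp
    (((Real.cos θ : ℂ) ^ 2) • P + ((Real.sin θ : ℂ) ^ 2) • (1 - P))
    (-(((Real.cos θ : ℂ) * (Real.sin θ : ℂ)) • (1 : K →L[ℂ] K)))
    (-(((Real.cos θ : ℂ) * (Real.sin θ : ℂ)) • (1 : K →L[ℂ] K)))
    (((Real.cos θ : ℂ) ^ 2) • (1 - P) + ((Real.sin θ : ℂ) ^ 2) • P)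

/-! Writing `Q = I - P`, every block of `P(θ,P)` has the form `a • P + b • Q`, and for an
idempotent `P` the map `(a, b) ↦ a • P + b • Q` is a ring homomorphism `ℂ × ℂ → End K`. Hence
the block identities reduce to scalar identities modulo `cos²θ + sin²θ = 1`. Conjugation by a
unitary `γ` with `γ P γ* = Q` swaps `P` and `Q`, i.e. the two coefficients, which on the diagonal
blocks is exactly passing to `I - P(θ,P)`. For the kernel, the components of `P(θ,P) ξ` are
`c u + s w` and `-(s u + c w)`, where `u = c P ξ₊ - s P ξ₋ ∈ ran P` and
`w = s Q ξ₊ - c Q ξ₋ ∈ ran Q`; applying `P` separates `u` from `w`. -/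

@[ext]
theorem WithLp.prod_ext {p : ENNReal} {α β : Type*} {x y : WithLp p (α × β)}
    (h₁ : x.fst = y.fst) (h₂ : x.snd = y.snd) : x = y :=
  WithLp.ofLp_injective p (Prod.ext h₁ h₂)

theorem WithLp.prod_eq_zero_iff {p : ENNReal} {α β : Type*} [AddCommGroup α] [AddCommGroup β]
    {x : WithLp p (α × β)} : x = 0 ↔ x.fst = 0 ∧ x.snd = 0 :=
  ⟨fun h ↦ h ▸ ⟨rfl, rfl⟩, fun h ↦ WithLp.prod_ext h.1 h.2⟩

section IdempotentCombination

variable {R A : Type*} [CommRing R] [Ring A] [Algebra R A]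

def idemComb (p : A) (a b : R) : A := a • p + b • (1 - p)

theorem idemComb_self (p : A) (a : R) : idemComb p a a = a • 1 := by
  rw [idemComb, ← smul_add, add_sub_cancel]

theorem idemComb_add_idemComb (p : A) (a b a' b' : R) :
    idemComb p a b + idemComb p a' b' = idemComb p (a + a') (b + b') := by
  simp only [idemComb, add_smul]
  abel

theorem one_sub_idemComb (p : A) (a b : R) :
    1 - idemComb p a b = idemComb p (1 - a) (1 - b) := by
  simp only [idemComb, sub_smul, one_smul]
  abel

theorem idemComb_mul_idemComb {p : A} (hp : IsIdempotentElem p) (a b a' b' : R) :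
    idemComb p a b * idemComb p a' b' = idemComb p (a * a') (b * b') := by
  have hpq : p * (1 - p) = 0 := by rw [mul_sub, mul_one, hp.eq, sub_self]
  have hqp : (1 - p) * p = 0 := by rw [sub_mul, one_mul, hp.eq, sub_self]
  simp only [idemComb, add_mul, mul_add, smul_mul_smul_comm, hp.eq, hp.one_sub.eq, hpq, hqp,
    smul_zero, add_zero, zero_add]

theorem mul_idemComb_mul {p u v : A} (huv : u * v = 1) (hupv : u * p * v = 1 - p) (a b : R) :
    u * idemComb p a b * v = idemComb p b a := by
  simp only [idemComb, mul_add, add_mul, mul_smul_comm, smul_mul_assoc, mul_sub, sub_mul,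
    mul_one, huv, hupv, sub_sub_cancel]
  abel

theorem IsSelfAdjoint.idemComb [StarRing R] [StarRing A] [StarModule R A] {p : A}
    (hp : IsSelfAdjoint p) {a b : R} (ha : IsSelfAdjoint a) (hb : IsSelfAdjoint b) :
    IsSelfAdjoint (idemComb p a b) :=
  (ha.smul hp).add (hb.smul ((IsSelfAdjoint.one A).sub hp))

end IdempotentCombination

theorem eq_zero_of_smul_eq_zero_of_sq_add_sq_eq_one {R E : Type*} [CommRing R]
    [AddCommGroup E] [Module R E] {c s : R} (h : c ^ 2 + s ^ 2 = 1) {v : E}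
    (hc : c • v = 0) (hs : s • v = 0) : v = 0 :=
  calc v = (c ^ 2 + s ^ 2) • v := by rw [h, one_smul]
    _ = c • c • v + s • s • v := by module
    _ = 0 := by rw [hc, hs, smul_zero, smul_zero, add_zero]

theorem smul_add_smul_eq_zero_and_iff {R E : Type*} [CommRing R] [AddCommGroup E]
    [Module R E] (P : E →ₗ[R] E) {u w : E} (hu : P u = u) (hw : P w = 0) {c s : R}
    (h : c ^ 2 + s ^ 2 = 1) :
    (c • u + s • w = 0 ∧ s • u + c • w = 0) ↔ (u = 0 ∧ w = 0) := by
  refine ⟨fun ⟨h₁, h₂⟩ ↦ ?_, fun ⟨hu₀, hw₀⟩ ↦ by simp [hu₀, hw₀]⟩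
  have hPh₁ := congrArg P h₁
  have hPh₂ := congrArg P h₂
  simp only [map_add, map_smul, hu, hw, smul_zero, add_zero, map_zero] at hPh₁ hPh₂
  have hu₀ := eq_zero_of_smul_eq_zero_of_sq_add_sq_eq_one h hPh₁ hPh₂
  simp only [hu₀, smul_zero, zero_add] at h₁ h₂
  exact ⟨hu₀, eq_zero_of_smul_eq_zero_of_sq_add_sq_eq_one h h₂ h₁⟩

section BlockOperators

variable (A B C D : K →L[ℂ] K)

@[simp]
theorem blockOp_apply_fst (x : WithLp 2 (K × K)) :
    (blockOp A B C D x).fst = A x.fst + B x.snd := rfl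

@[simp]
theorem blockOp_apply_snd (x : WithLp 2 (K × K)) :
    (blockOp A B C D x).snd = C x.fst + D x.snd := rfl

theorem blockOp_comp_blockOp (A' B' C' D' : K →L[ℂ] K) :
    blockOp A B C D ∘L blockOp A' B' C' D' =
      blockOp (A * A' + B * C') (A * B' + B * D') (C * A' + D * C') (C * B' + D * D') := by
  ext x <;>
  · simp only [comp_apply, blockOp_apply_fst, blockOp_apply_snd, add_apply, mul_apply_eq_comp,
      map_add]
    abel

theorem diag_comp_blockOp_comp_diag (U V U' V' : K →L[ℂ] K) :
    blockOp U 0 0 V ∘L blockOp A B C D ∘L blockOp U' 0 0 V' =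
      blockOp (U * A * U') (U * B * V') (V * C * U') (V * D * V') := by
  simp only [blockOp_comp_blockOp, zero_mul, mul_zero, add_zero, zero_add, mul_assoc]

theorem one_sub_blockOp : 1 - blockOp A B C D = blockOp (1 - A) (-B) (-C) (1 - D) := by
  ext x <;>
  · simp only [sub_apply, one_apply_eq_self, WithLp.sub_fst, WithLp.sub_snd, blockOp_apply_fst,
      blockOp_apply_snd, neg_apply]
    abel

theorem adjoint_blockOp [CompleteSpace K] :
    adjoint (blockOp A B C D) = blockOp (adjoint A) (adjoint C) (adjoint B) (adjoint D) := by
  refine ((eq_adjoint_iff _ _).mpr fun x y ↦ ?_).symm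
  simp only [WithLp.prod_inner_apply]
  change inner ℂ (adjoint A x.fst + adjoint C x.snd) y.fst
      + inner ℂ (adjoint B x.fst + adjoint D x.snd) y.snd
    = inner ℂ x.fst (A y.fst + B y.snd) + inner ℂ x.snd (C y.fst + D y.snd)
  simp only [inner_add_left, inner_add_right, adjoint_inner_left]
  ring

theorem toSum_prodMap_eq_blockOp : toSum (A.prodMap D) = blockOp A 0 0 D := by
  ext x <;> simp [toSum, prodE]

theorem gammaTilde_eq_blockOp (γ : K →L[ℂ] K) : gammaTilde γ = blockOp γ 0 0 (-γ) :=
  toSum_prodMap_eq_blockOp γ (-γ)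

end BlockOperators

theorem mem_diagSub_iff {x : WithLp 2 (K × K)} : x ∈ diagSub K ↔ x.fst = x.snd := by
  refine ⟨?_, fun h ↦ ⟨x.fst, WithLp.prod_ext rfl h⟩⟩
  rintro ⟨f, rfl⟩
  rfl

theorem mem_orthogonal_diagSub_iff {x : WithLp 2 (K × K)} :
    x ∈ (diagSub K)ᗮ ↔ x.fst + x.snd = 0 := by
  have inner_diag (f : K) : inner ℂ (WithLp.toLp 2 (f, f)) x = inner ℂ f (x.fst + x.snd) := by
    rw [WithLp.prod_inner_apply, inner_add_right]
    rfl
  simp only [Submodule.mem_orthogonal, diagSub, LinearMap.mem_range, forall_exists_index,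
    forall_apply_eq_imp_iff]
  change (∀ f : K, inner ℂ (WithLp.toLp 2 (f, f)) x = 0) ↔ _
  simp only [inner_diag]
  exact ⟨fun h ↦ inner_self_eq_zero.mp (h _), fun h f ↦ by rw [h, inner_zero_right]⟩

section Ptheta

variable (θ : ℝ) {P : K →L[ℂ] K}

theorem ofReal_cos_sq_add_ofReal_sin_sq : (Real.cos θ : ℂ) ^ 2 + (Real.sin θ : ℂ) ^ 2 = 1 := by
  exact_mod_cast Real.cos_sq_add_sin_sq θ

theorem Ptheta_eq_blockOp_idemComb :
    Ptheta θ P = blockOp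
      (idemComb P ((Real.cos θ : ℂ) ^ 2) ((Real.sin θ : ℂ) ^ 2))
      (idemComb P (-(Real.cos θ * Real.sin θ : ℂ)) (-(Real.cos θ * Real.sin θ : ℂ)))
      (idemComb P (-(Real.cos θ * Real.sin θ : ℂ)) (-(Real.cos θ * Real.sin θ : ℂ)))
      (idemComb P ((Real.sin θ : ℂ) ^ 2) ((Real.cos θ : ℂ) ^ 2)) := by
  rw [Ptheta, idemComb_self, neg_smul, idemComb, idemComb, add_comm (_ • (1 - P))]

theorem isSelfAdjoint_Ptheta [CompleteSpace K] (hP : IsSelfAdjoint P) :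
    IsSelfAdjoint (Ptheta θ P) := by
  have hc : IsSelfAdjoint (Real.cos θ : ℂ) := Complex.conj_ofReal _
  have hs : IsSelfAdjoint (Real.sin θ : ℂ) := Complex.conj_ofReal _
  have hcs := (hc.mul hs).neg
  rw [isSelfAdjoint_iff', Ptheta_eq_blockOp_idemComb, adjoint_blockOp,
    (hP.idemComb (hc.pow 2) (hs.pow 2)).adjoint_eq, (hP.idemComb hcs hcs).adjoint_eq,
    (hP.idemComb (hs.pow 2) (hc.pow 2)).adjoint_eq]

theorem Ptheta_comp_Ptheta (hP : IsIdempotentElem P) :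
    Ptheta θ P ∘L Ptheta θ P = Ptheta θ P := by
  have h := ofReal_cos_sq_add_ofReal_sin_sq θ
  rw [Ptheta_eq_blockOp_idemComb, blockOp_comp_blockOp]
  simp only [idemComb_mul_idemComb hP, idemComb_add_idemComb]
  congr 1 <;> congr 1 <;> grind

theorem gammaTilde_comp_Ptheta_comp_adjoint [CompleteSpace K] {γ : K →L[ℂ] K}
    (hγ : γ * adjoint γ = 1) (hPγ : γ * P * adjoint γ = 1 - P) :
    gammaTilde γ ∘L Ptheta θ P ∘L adjoint (gammaTilde γ) = 1 - Ptheta θ P := by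
  have h := ofReal_cos_sq_add_ofReal_sin_sq θ
  rw [gammaTilde_eq_blockOp, adjoint_blockOp, map_neg, map_zero, Ptheta_eq_blockOp_idemComb,
    diag_comp_blockOp_comp_diag, one_sub_blockOp]
  simp only [mul_neg, neg_mul, neg_neg, mul_idemComb_mul hγ hPγ, one_sub_idemComb]
  congr 1 <;> congr 1 <;> grind

theorem Ptheta_zero : Ptheta 0 P = toSum (P.prodMap (1 - P)) := by
  simp [Ptheta, toSum_prodMap_eq_blockOp]

theorem Ptheta_pi_div_four : Ptheta (Real.pi / 4) P =
    blockOp ((2⁻¹ : ℂ) • 1) (-((2⁻¹ : ℂ) • 1)) (-((2⁻¹ : ℂ) • 1)) ((2⁻¹ : ℂ) • 1) := by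
  have half_sq : ((√2 / 2 : ℝ) : ℂ) ^ 2 = 2⁻¹ := by
    rw [← Complex.ofReal_pow, div_pow, Real.sq_sqrt zero_le_two]
    norm_num
  rw [Ptheta_eq_blockOp_idemComb, Real.cos_pi_div_four, Real.sin_pi_div_four, ← sq, half_sq,
    idemComb_self, idemComb_self, neg_smul]

theorem Ptheta_pi_div_four_apply_mem_orthogonal_diagSub (x : WithLp 2 (K × K)) :
    Ptheta (Real.pi / 4) P x ∈ (diagSub K)ᗮ := by
  rw [mem_orthogonal_diagSub_iff, Ptheta_pi_div_four]
  simp only [blockOp_apply_fst, blockOp_apply_snd, neg_apply, smul_apply, one_apply_eq_self]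
  module

theorem sub_Ptheta_pi_div_four_apply_mem_diagSub (x : WithLp 2 (K × K)) :
    x - Ptheta (Real.pi / 4) P x ∈ diagSub K := by
  rw [mem_diagSub_iff, Ptheta_pi_div_four]
  simp only [WithLp.sub_fst, WithLp.sub_snd, blockOp_apply_fst, blockOp_apply_snd, neg_apply,
    smul_apply, one_apply_eq_self]
  module

theorem Ptheta_apply_eq_zero_iff (hP : IsIdempotentElem P) (ξ : WithLp 2 (K × K)) :
    Ptheta θ P ξ = 0 ↔
      ((Real.cos θ : ℂ) • P ξ.fst = (Real.sin θ : ℂ) • P ξ.snd ∧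
        (Real.sin θ : ℂ) • (ξ.fst - P ξ.fst) = (Real.cos θ : ℂ) • (ξ.snd - P ξ.snd)) := by
  set u := (Real.cos θ : ℂ) • P ξ.fst - (Real.sin θ : ℂ) • P ξ.snd
  set w := (Real.sin θ : ℂ) • (ξ.fst - P ξ.fst) - (Real.cos θ : ℂ) • (ξ.snd - P ξ.snd)
  have hPP (v : K) : P (P v) = P v := DFunLike.congr_fun hP.eq v
  have hu : P u = u := by simp only [u, map_sub, map_smul, hPP]
  have hw : P w = 0 := by simp only [w, map_sub, map_smul, hPP, sub_self, smul_zero]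
  have hfst : (Ptheta θ P ξ).fst = (Real.cos θ : ℂ) • u + (Real.sin θ : ℂ) • w := by
    simp only [Ptheta, blockOp_apply_fst, add_apply, smul_apply, sub_apply, neg_apply,
      one_apply_eq_self]
    module
  have hsnd : (Ptheta θ P ξ).snd = -((Real.sin θ : ℂ) • u + (Real.cos θ : ℂ) • w) := by
    simp only [Ptheta, blockOp_apply_snd, add_apply, smul_apply, sub_apply, neg_apply,
      one_apply_eq_self]
    module
  rw [WithLp.prod_eq_zero_iff, hfst, hsnd, neg_eq_zero,
    smul_add_smul_eq_zero_and_iff (P : K →ₗ[ℂ] K) hu hw (ofReal_cos_sq_add_ofReal_sin_sq θ),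
    sub_eq_zero, sub_eq_zero]

end Ptheta

theorem statement7 [CompleteSpace K] (γ : K →L[ℂ] K)
    (hsq : γ ∘L γ = -1) (hadj : adjoint γ = -γ)
    (P : K →L[ℂ] K) (hPsa : IsSelfAdjoint P) (hPidem : P ∘L P = P)
    (hPlag : γ ∘L P ∘L adjoint γ = 1 - P) :
    (∀ θ : ℝ,
      IsSelfAdjoint (Ptheta θ P) ∧ (Ptheta θ P) ∘L (Ptheta θ P) = Ptheta θ P ∧
      gammaTilde γ ∘L Ptheta θ P ∘L adjoint (gammaTilde γ) = 1 - Ptheta θ P) ∧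
    (Ptheta 0 P = toSum (P.prodMap (1 - P))) ∧
    (Ptheta (Real.pi / 4) P =
        blockOp ((2⁻¹ : ℂ) • 1) (-((2⁻¹ : ℂ) • 1)) (-((2⁻¹ : ℂ) • 1)) ((2⁻¹ : ℂ) • 1) ∧
      ∀ x : WithLp 2 (K × K),
        Ptheta (Real.pi / 4) P x ∈ (diagSub K)ᗮ ∧
        x - Ptheta (Real.pi / 4) P x ∈ ((diagSub K)ᗮ)ᗮ) ∧
    (∀ (θ : ℝ) (ξ : WithLp 2 (K × K)),
      Ptheta θ P ξ = 0 ↔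
        ((Real.cos θ : ℂ) • P ((prodE K ξ).1) = (Real.sin θ : ℂ) • P ((prodE K ξ).2) ∧
         (Real.sin θ : ℂ) • ((prodE K ξ).1 - P ((prodE K ξ).1)) =
           (Real.cos θ : ℂ) • ((prodE K ξ).2 - P ((prodE K ξ).2)))) := by
  have hP : IsIdempotentElem P := hPidem
  have hγ : γ * adjoint γ = 1 := by rw [hadj, mul_neg, mul_def, hsq, neg_neg]
  refine ⟨fun θ ↦ ⟨isSelfAdjoint_Ptheta θ hPsa, Ptheta_comp_Ptheta θ hP,
      gammaTilde_comp_Ptheta_comp_adjoint θ hγ hPlag⟩,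
    Ptheta_zero, ⟨Ptheta_pi_div_four, fun x ↦ ⟨Ptheta_pi_div_four_apply_mem_orthogonal_diagSub x,
      Submodule.le_orthogonal_orthogonal _ (sub_Ptheta_pi_div_four_apply_mem_diagSub x)⟩⟩,
    fun θ ξ ↦ Ptheta_apply_eq_zero_iff θ hP ξ⟩
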